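/- Characterization of MINC-definability: a class 𝒦 of Φ-models with teams (Φ finite) is definable by a MINC-formula if and only if 𝒦 is closed under unions (if (K,T_i) ∈ 𝒦 for all i then (K, ⋃T_i) ∈ 𝒦), closed under team k-bisimulation for some k ∈ ℕ, and contains (K,∅) for every Kripke model K. -/

import Mathlib

namespace TeamSem

structure KripkeModel (Φ : Type) where
  W : Type
  R : W → W → Prop
  V : Φ → Set W

variable {Φ : Type}

/-- Image `R[T]` of a team under the accessibility relation. -/
def img (K : KripkeModel Φ) (T : Set K.W) : Set K.W := {v | ∃ w ∈ T, K.R w v}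

/-- Preimage `R⁻¹[S]`. -/
def preimg (K : KripkeModel Φ) (S : Set K.W) : Set K.W := {w | ∃ v ∈ S, K.R w v}

/-- `T[R]S` : `S ⊆ R[T]` and `T ⊆ R⁻¹[S]`. -/
def relStep (K : KripkeModel Φ) (T S : Set K.W) : Prop :=
  S ⊆ img K T ∧ T ⊆ preimg K S

/-- ML formulas in negation normal form. -/
inductive MLFormula (Φ : Type) where
  | atom : Φ → MLFormula Φ
  | natom : Φ → MLFormula Φ
  | and : MLFormula Φ → MLFormula Φ → MLFormula Φ
  | or : MLFormula Φ → MLFormula Φ → MLFormula Φ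
  | dia : MLFormula Φ → MLFormula Φ
  | box : MLFormula Φ → MLFormula Φ

/-- Lax team semantics for ML. -/
def mlSat (K : KripkeModel Φ) : MLFormula Φ → Set K.W → Prop
  | .atom p, T => T ⊆ K.V p
  | .natom p, T => T ∩ K.V p = ∅
  | .and φ ψ, T => mlSat K φ T ∧ mlSat K ψ T
  | .or φ ψ, T => ∃ T₁ T₂, T = T₁ ∪ T₂ ∧ mlSat K φ T₁ ∧ mlSat K ψ T₂
  | .dia φ, T => ∃ S, relStep K T S ∧ mlSat K φ S
  | .box φ, T => mlSat K φ (img K T)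

/-- Standard single-world Kripke semantics for ML. -/
def mlSatW (K : KripkeModel Φ) : MLFormula Φ → K.W → Prop
  | .atom p, w => w ∈ K.V p
  | .natom p, w => w ∉ K.V p
  | .and φ ψ, w => mlSatW K φ w ∧ mlSatW K ψ w
  | .or φ ψ, w => mlSatW K φ w ∨ mlSatW K ψ w
  | .dia φ, w => ∃ v, K.R w v ∧ mlSatW K φ v
  | .box φ, w => ∀ v, K.R w v → mlSatW K φ v

/-- Modal depth of an ML formula. -/
def mlMd : MLFormula Φ → ℕ
  | .atom _ => 0
  | .natom _ => 0
  | .and φ ψ => max (mlMd φ) (mlMd ψ)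
  | .or φ ψ => max (mlMd φ) (mlMd ψ)
  | .dia φ => mlMd φ + 1
  | .box φ => mlMd φ + 1

/-- `k`-bisimulation between pointed Kripke models. -/
def bisim (K K' : KripkeModel Φ) : ℕ → K.W → K'.W → Prop
  | 0, w, w' => ∀ p, w ∈ K.V p ↔ w' ∈ K'.V p
  | k + 1, w, w' => (∀ p, w ∈ K.V p ↔ w' ∈ K'.V p) ∧
      (∀ v, K.R w v → ∃ v', K'.R w' v' ∧ bisim K K' k v v') ∧
      (∀ v', K'.R w' v' → ∃ v, K.R w v ∧ bisim K K' k v v')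

/-- Team `k`-bisimilarity: domain and range totality. -/
def teamBisim (K K' : KripkeModel Φ) (k : ℕ) (T : Set K.W) (T' : Set K'.W) : Prop :=
  (∀ w ∈ T, ∃ w' ∈ T', bisim K K' k w w') ∧
  (∀ w' ∈ T', ∃ w ∈ T, bisim K K' k w w')

/-- Formulas of modal inclusion logic MINC. -/
inductive MINCFormula (Φ : Type) where
  | atom : Φ → MINCFormula Φ
  | natom : Φ → MINCFormula Φ
  | and : MINCFormula Φ → MINCFormula Φ → MINCFormula Φ
  | or : MINCFormula Φ → MINCFormula Φ → MINCFormula Φ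
  | dia : MINCFormula Φ → MINCFormula Φ
  | box : MINCFormula Φ → MINCFormula Φ
  | inc : List (MLFormula Φ) → List (MLFormula Φ) → MINCFormula Φ

/-- Team semantics for MINC. -/
def mincSat (K : KripkeModel Φ) : MINCFormula Φ → Set K.W → Prop
  | .atom p, T => T ⊆ K.V p
  | .natom p, T => T ∩ K.V p = ∅
  | .and φ ψ, T => mincSat K φ T ∧ mincSat K ψ T
  | .or φ ψ, T => ∃ T₁ T₂, T = T₁ ∪ T₂ ∧ mincSat K φ T₁ ∧ mincSat K ψ T₂
  | .dia φ, T => ∃ S, relStep K T S ∧ mincSat K φ S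
  | .box φ, T => mincSat K φ (img K T)
  | .inc φs ψs, T => ∀ w ∈ T, ∃ v ∈ T,
      ∀ pr ∈ φs.zip ψs, (mlSatW K pr.1 w ↔ mlSatW K pr.2 v)

/-- Modal depth of a MINC formula. -/
def mincMd : MINCFormula Φ → ℕ
  | .atom _ => 0
  | .natom _ => 0
  | .and φ ψ => max (mincMd φ) (mincMd ψ)
  | .or φ ψ => max (mincMd φ) (mincMd ψ)
  | .dia φ => mincMd φ + 1
  | .box φ => mincMd φ + 1
  | .inc φs ψs => ((φs ++ ψs).map mlMd).foldr max 0

/-- Formulas of ML(▽), modal logic with the nonemptiness operator. -/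
inductive NFormula (Φ : Type) where
  | atom : Φ → NFormula Φ
  | natom : Φ → NFormula Φ
  | and : NFormula Φ → NFormula Φ → NFormula Φ
  | or : NFormula Φ → NFormula Φ → NFormula Φ
  | dia : NFormula Φ → NFormula Φ
  | box : NFormula Φ → NFormula Φ
  | ne : NFormula Φ → NFormula Φ

/-- Team semantics for ML(▽). -/
def nSat (K : KripkeModel Φ) : NFormula Φ → Set K.W → Prop
  | .atom p, T => T ⊆ K.V p
  | .natom p, T => T ∩ K.V p = ∅
  | .and φ ψ, T => nSat K φ T ∧ nSat K ψ T
  | .or φ ψ, T => ∃ T₁ T₂, T = T₁ ∪ T₂ ∧ nSat K φ T₁ ∧ nSat K ψ T₂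
  | .dia φ, T => ∃ S, relStep K T S ∧ nSat K φ S
  | .box φ, T => nSat K φ (img K T)
  | .ne φ, T => T = ∅ ∨ ∃ S, S ⊆ T ∧ S.Nonempty ∧ nSat K φ S

/-- Modal depth of an ML(▽) formula. -/
def nMd : NFormula Φ → ℕ
  | .atom _ => 0
  | .natom _ => 0
  | .and φ ψ => max (nMd φ) (nMd ψ)
  | .or φ ψ => max (nMd φ) (nMd ψ)
  | .dia φ => nMd φ + 1
  | .box φ => nMd φ + 1
  | .ne φ => nMd φ

/-- Number of occurrences of ▽ in an ML(▽) formula. -/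
def nCount : NFormula Φ → ℕ
  | .atom _ => 0
  | .natom _ => 0
  | .and φ ψ => nCount φ + nCount ψ
  | .or φ ψ => nCount φ + nCount ψ
  | .dia φ => nCount φ
  | .box φ => nCount φ
  | .ne φ => nCount φ + 1

/-- Subformula occurrence at a position (path) in the syntax tree. -/
def subAt : NFormula Φ → List ℕ → Option (NFormula Φ)
  | φ, [] => some φ
  | .and θ _, 0 :: l => subAt θ l
  | .and _ η, 1 :: l => subAt η l
  | .or θ _, 0 :: l => subAt θ l
  | .or _ η, 1 :: l => subAt η l
  | .dia θ, 0 :: l => subAt θ l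
  | .box θ, 0 :: l => subAt θ l
  | .ne θ, 0 :: l => subAt θ l
  | _, _ => none

/-- `F` is a winning-strategy labeling of the syntax tree of `φ` for `(K,T)`. -/
def IsWinning (K : KripkeModel Φ) (φ : NFormula Φ) (T : Set K.W)
    (F : List ℕ → Set K.W) : Prop :=
  F [] = T ∧
  ∀ π ψ, subAt φ π = some ψ →
    match ψ with
    | .atom p => F π ⊆ K.V p
    | .natom p => F π ∩ K.V p = ∅
    | .and _ _ => F π = F (π ++ [0]) ∧ F π = F (π ++ [1])
    | .or _ _ => F π = F (π ++ [0]) ∪ F (π ++ [1])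
    | .dia _ => relStep K (F π) (F (π ++ [0]))
    | .box _ => F (π ++ [0]) = img K (F π)
    | .ne _ => F (π ++ [0]) ⊆ F π ∧ (F π ≠ ∅ → F (π ++ [0]) ≠ ∅)



/-!
Every MINC formula is closed under unions, has the empty team property, and is invariant under
team `k`-bisimulation once `k` bounds its modal depth; this gives one direction.

Conversely, over finitely many propositions there are only finitely many `k`-types of
worlds, and each type `τ` is defined at single worlds by a modal formula `χ_τ`. For a set `S`
of types, `(⋁_{τ ∈ S} χ_τ) ∧ ⋀_{τ ∈ S} (⊤ ⊆ χ_τ)` holds in a team iff the team is empty or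
realises exactly the types in `S`. The disjunction of these formulas over the type sets
realised by teams of `𝒦` defines `𝒦`: a team satisfying it is a union of subteams, each empty
or team `k`-bisimilar to a team of `𝒦`.
-/

section Semantics

variable {Φ : Type} {K : KripkeModel Φ}

lemma img_mono {T T' : Set K.W} (h : T ⊆ T') : img K T ⊆ img K T' :=
  fun _ ⟨w, hw, hr⟩ => ⟨w, h hw, hr⟩

lemma preimg_mono {S S' : Set K.W} (h : S ⊆ S') : preimg K S ⊆ preimg K S' :=
  fun _ ⟨v, hv, hr⟩ => ⟨v, h hv, hr⟩

lemma img_empty : img K ∅ = ∅ := by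
  simp [img]

lemma img_iUnion {I : Type} (T : I → Set K.W) : img K (⋃ i, T i) = ⋃ i, img K (T i) := by
  ext v
  simp only [img, Set.mem_iUnion, Set.mem_ofPred_eq]
  tauto

lemma mincSat_empty (φ : MINCFormula Φ) : mincSat K φ ∅ := by
  induction φ with
  | atom p => exact Set.empty_subset _
  | natom p => exact Set.empty_inter _
  | and φ ψ ihφ ihψ => exact ⟨ihφ, ihψ⟩
  | or φ ψ ihφ ihψ => exact ⟨∅, ∅, (Set.union_self ∅).symm, ihφ, ihψ⟩
  | dia φ ih => exact ⟨∅, ⟨Set.empty_subset _, Set.empty_subset _⟩, ih⟩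
  | box φ ih => exact (congrArg (mincSat K φ) img_empty).mpr ih
  | inc φs ψs => exact fun w hw => absurd hw (Set.notMem_empty w)

lemma mincSat_iUnion {I : Type} (φ : MINCFormula Φ) :
    ∀ T : I → Set K.W, (∀ i, mincSat K φ (T i)) → mincSat K φ (⋃ i, T i) := by
  induction φ with
  | atom p => exact fun _ h => Set.iUnion_subset h
  | natom p => exact fun _ h => (Set.iUnion_inter _ _).trans (Set.iUnion_eq_empty.2 h)
  | and φ ψ ihφ ihψ => exact fun T h => ⟨ihφ T fun i => (h i).1, ihψ T fun i => (h i).2⟩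
  | or φ ψ ihφ ihψ =>
      intro T h
      choose T₁ T₂ hT h₁ h₂ using h
      refine ⟨⋃ i, T₁ i, ⋃ i, T₂ i, ?_, ihφ _ h₁, ihψ _ h₂⟩
      rw [← Set.iUnion_union_distrib]
      exact Set.iUnion_congr hT
  | dia φ ih =>
      intro T h
      choose S hS hsat using h
      refine ⟨⋃ i, S i, ⟨?_, ?_⟩, ih _ hsat⟩
      · exact Set.iUnion_subset fun i => (hS i).1.trans (img_mono (Set.subset_iUnion T i))
      · exact Set.iUnion_subset fun i => (hS i).2.trans (preimg_mono (Set.subset_iUnion S i))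
  | box φ ih =>
      intro T h
      show mincSat K φ (img K (⋃ i, T i))
      rw [img_iUnion]
      exact ih _ h
  | inc φs ψs =>
      intro T h w hw
      obtain ⟨i, hi⟩ := Set.mem_iUnion.1 hw
      obtain ⟨v, hv, hagree⟩ := h i w hi
      exact ⟨v, Set.mem_iUnion.2 ⟨i, hv⟩, hagree⟩

end Semantics

section Bisimulation

variable {Φ : Type} {K K' : KripkeModel Φ} {k : ℕ}

lemma bisim_atoms {w : K.W} {w' : K'.W} (h : bisim K K' k w w') (p : Φ) :
    w ∈ K.V p ↔ w' ∈ K'.V p := by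
  cases k with
  | zero => exact h p
  | succ k => exact h.1 p

lemma mlSatW_iff_of_bisim (ψ : MLFormula Φ) :
    ∀ {k : ℕ} {w : K.W} {w' : K'.W}, mlMd ψ ≤ k → bisim K K' k w w' →
      (mlSatW K ψ w ↔ mlSatW K' ψ w') := by
  induction ψ with
  | atom p => exact fun _ hb => bisim_atoms hb p
  | natom p => exact fun _ hb => not_congr (bisim_atoms hb p)
  | and φ χ ihφ ihχ =>
      intro k w w' hd hb
      rw [mlMd, max_le_iff] at hd
      exact and_congr (ihφ hd.1 hb) (ihχ hd.2 hb)
  | or φ χ ihφ ihχ =>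
      intro k w w' hd hb
      rw [mlMd, max_le_iff] at hd
      exact or_congr (ihφ hd.1 hb) (ihχ hd.2 hb)
  | dia φ ih =>
      intro k w w' hd hb
      obtain _ | k := k
      · exact absurd hd (by simp [mlMd])
      obtain ⟨-, hforth, hback⟩ := hb
      replace hd : mlMd φ ≤ k := Nat.le_of_succ_le_succ hd
      constructor
      · rintro ⟨v, hr, hv⟩
        obtain ⟨v', hr', hbv⟩ := hforth v hr
        exact ⟨v', hr', (ih hd hbv).1 hv⟩
      · rintro ⟨v', hr', hv'⟩
        obtain ⟨v, hr, hbv⟩ := hback v' hr'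
        exact ⟨v, hr, (ih hd hbv).2 hv'⟩
  | box φ ih =>
      intro k w w' hd hb
      obtain _ | k := k
      · exact absurd hd (by simp [mlMd])
      obtain ⟨-, hforth, hback⟩ := hb
      replace hd : mlMd φ ≤ k := Nat.le_of_succ_le_succ hd
      constructor
      · intro h v' hr'
        obtain ⟨v, hr, hbv⟩ := hback v' hr'
        exact (ih hd hbv).1 (h v hr)
      · intro h v hr
        obtain ⟨v', hr', hbv⟩ := hforth v hr
        exact (ih hd hbv).2 (h v' hr')

lemma teamBisim_restrict {T T₁ : Set K.W} {T' : Set K'.W} (hb : teamBisim K K' k T T')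
    (hT₁ : T₁ ⊆ T) :
    teamBisim K K' k T₁ {w' ∈ T' | ∃ w ∈ T₁, bisim K K' k w w'} := by
  refine ⟨fun w hw => ?_, fun w' ⟨_, w, hw, hbw⟩ => ⟨w, hw, hbw⟩⟩
  obtain ⟨w', hw', hbw⟩ := hb.1 w (hT₁ hw)
  exact ⟨w', ⟨hw', w, hw, hbw⟩, hbw⟩

lemma teamBisim_exists_union {T₁ T₂ : Set K.W} {T' : Set K'.W}
    (hb : teamBisim K K' k (T₁ ∪ T₂) T') :
    ∃ T₁' T₂', T' = T₁' ∪ T₂' ∧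
      teamBisim K K' k T₁ T₁' ∧ teamBisim K K' k T₂ T₂' := by
  refine ⟨_, _, Set.ext fun w' => ⟨fun hw' => ?_, ?_⟩,
    teamBisim_restrict hb Set.subset_union_left, teamBisim_restrict hb Set.subset_union_right⟩
  · obtain ⟨w, hw | hw, hbw⟩ := hb.2 w' hw'
    exacts [Or.inl ⟨hw', w, hw, hbw⟩, Or.inr ⟨hw', w, hw, hbw⟩]
  · rintro (⟨hw', -⟩ | ⟨hw', -⟩) <;> exact hw'

lemma teamBisim_img {T : Set K.W} {T' : Set K'.W} (hb : teamBisim K K' (k + 1) T T') :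
    teamBisim K K' k (img K T) (img K' T') := by
  constructor
  · rintro v ⟨w, hw, hr⟩
    obtain ⟨w', hw', -, hforth, -⟩ := hb.1 w hw
    obtain ⟨v', hr', hbv⟩ := hforth v hr
    exact ⟨v', ⟨w', hw', hr'⟩, hbv⟩
  · rintro v' ⟨w', hw', hr'⟩
    obtain ⟨w, hw, -, -, hback⟩ := hb.2 w' hw'
    obtain ⟨v, hr, hbv⟩ := hback v' hr'
    exact ⟨v, ⟨w, hw, hr⟩, hbv⟩

lemma teamBisim_exists_relStep {T S : Set K.W} {T' : Set K'.W}
    (hb : teamBisim K K' (k + 1) T T') (hS : relStep K T S) :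
    ∃ S', relStep K' T' S' ∧ teamBisim K K' k S S' := by
  refine ⟨_, ⟨fun v' hv' => hv'.1, fun w' hw' => ?_⟩,
    teamBisim_restrict (teamBisim_img hb) hS.1⟩
  obtain ⟨w, hw, -, hforth, -⟩ := hb.2 w' hw'
  obtain ⟨v, hv, hr⟩ := hS.2 hw
  obtain ⟨v', hr', hbv⟩ := hforth v hr
  exact ⟨v', ⟨⟨w', hw', hr'⟩, v, hv, hbv⟩, hr'⟩

lemma mincSat_of_teamBisim (φ : MINCFormula Φ) :
    ∀ {k : ℕ} {K K' : KripkeModel Φ} {T : Set K.W} {T' : Set K'.W},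
      mincMd φ ≤ k → mincSat K φ T → teamBisim K K' k T T' → mincSat K' φ T' := by
  induction φ with
  | atom p =>
      intro k K K' T T' _ hsat hb w' hw'
      obtain ⟨w, hw, hbw⟩ := hb.2 w' hw'
      exact (bisim_atoms hbw p).1 (hsat hw)
  | natom p =>
      intro k K K' T T' _ hsat hb
      refine Set.eq_empty_of_forall_notMem fun w' ⟨hw', hp⟩ => ?_
      obtain ⟨w, hw, hbw⟩ := hb.2 w' hw'
      exact Set.eq_empty_iff_forall_notMem.1 hsat w ⟨hw, (bisim_atoms hbw p).2 hp⟩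
  | and φ ψ ihφ ihψ =>
      intro k K K' T T' hd hsat hb
      rw [mincMd, max_le_iff] at hd
      exact ⟨ihφ hd.1 hsat.1 hb, ihψ hd.2 hsat.2 hb⟩
  | or φ ψ ihφ ihψ =>
      intro k K K' T T' hd ⟨T₁, T₂, hT, h₁, h₂⟩ hb
      rw [mincMd, max_le_iff] at hd
      obtain ⟨T₁', T₂', hT', hb₁, hb₂⟩ := teamBisim_exists_union (hT ▸ hb)
      exact ⟨T₁', T₂', hT', ihφ hd.1 h₁ hb₁, ihψ hd.2 h₂ hb₂⟩
  | dia φ ih =>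
      intro k K K' T T' hd ⟨S, hS, hsat⟩ hb
      obtain _ | k := k
      · exact absurd hd (by simp [mincMd])
      obtain ⟨S', hS', hbS⟩ := teamBisim_exists_relStep hb hS
      exact ⟨S', hS', ih (Nat.le_of_succ_le_succ hd) hsat hbS⟩
  | box φ ih =>
      intro k K K' T T' hd hsat hb
      obtain _ | k := k
      · exact absurd hd (by simp [mincMd])
      exact ih (Nat.le_of_succ_le_succ hd) hsat (teamBisim_img hb)
  | inc φs ψs =>
      intro k K K' T T' hd hsat hb w' hw'
      obtain ⟨w, hw, hbw⟩ := hb.2 w' hw'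
      obtain ⟨v, hv, hagree⟩ := hsat w hw
      obtain ⟨v', hv', hbv⟩ := hb.1 v hv
      have hdepth : ∀ χ ∈ φs ++ ψs, mlMd χ ≤ k := fun χ hχ =>
        (List.le_max_of_le (List.mem_map_of_mem hχ) le_rfl).trans hd
      refine ⟨v', hv', fun pr hpr => ?_⟩
      obtain ⟨h₁, h₂⟩ := List.of_mem_zip hpr
      calc mlSatW K' pr.1 w'
          ↔ mlSatW K pr.1 w :=
            (mlSatW_iff_of_bisim pr.1 (hdepth _ (List.mem_append_left _ h₁)) hbw).symm
        _ ↔ mlSatW K pr.2 v := hagree pr hpr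
        _ ↔ mlSatW K' pr.2 v' :=
            mlSatW_iff_of_bisim pr.2 (hdepth _ (List.mem_append_right _ h₂)) hbv

end Bisimulation

noncomputable def listOf {α : Type*} [Finite α] (s : Set α) : List α :=
  s.toFinite.toFinset.toList

lemma mem_listOf {α : Type*} [Finite α] {s : Set α} {a : α} : a ∈ listOf s ↔ a ∈ s := by
  simp [listOf]

section Types

variable {Φ : Type}

def ModType (Φ : Type) : ℕ → Type
  | 0 => Set Φ
  | k + 1 => Set Φ × Set (ModType Φ k)

instance instFiniteModType [Finite Φ] (k : ℕ) : Finite (ModType Φ k) := by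
  induction k with
  | zero => unfold ModType; infer_instance
  | succ k ih => unfold ModType; infer_instance

def ty (K : KripkeModel Φ) : (k : ℕ) → K.W → ModType Φ k
  | 0, w => {p | w ∈ K.V p}
  | k + 1, w => ({p | w ∈ K.V p}, ty K k '' {v | K.R w v})

def tyset (K : KripkeModel Φ) (k : ℕ) (T : Set K.W) : Set (ModType Φ k) := ty K k '' T

variable {K K' : KripkeModel Φ}

lemma bisim_of_ty_eq :
    ∀ {k : ℕ} {w : K.W} {w' : K'.W}, ty K k w = ty K' k w' → bisim K K' k w w'
  | 0, _, _, h => fun p => Set.ext_iff.1 h p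
  | k + 1, w, w', h => by
      have hval : {p | w ∈ K.V p} = {p | w' ∈ K'.V p} := congrArg Prod.fst h
      have hsucc : ty K k '' {v | K.R w v} = ty K' k '' {v' | K'.R w' v'} := congrArg Prod.snd h
      refine ⟨fun p => Set.ext_iff.1 hval p, fun v hr => ?_, fun v' hr' => ?_⟩
      · obtain ⟨v', hr', he⟩ : ty K k v ∈ ty K' k '' {v' | K'.R w' v'} :=
          hsucc ▸ ⟨v, hr, rfl⟩
        exact ⟨v', hr', bisim_of_ty_eq he.symm⟩
      · obtain ⟨v, hr, he⟩ : ty K' k v' ∈ ty K k '' {v | K.R w v} :=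
          hsucc ▸ ⟨v', hr', rfl⟩
        exact ⟨v, hr, bisim_of_ty_eq he⟩

lemma teamBisim_of_tyset_eq {k : ℕ} {T : Set K.W} {T' : Set K'.W}
    (h : tyset K k T = tyset K' k T') : teamBisim K K' k T T' := by
  constructor
  · intro w hw
    obtain ⟨w', hw', he⟩ : ty K k w ∈ tyset K' k T' := h ▸ ⟨w, hw, rfl⟩
    exact ⟨w', hw', bisim_of_ty_eq he.symm⟩
  · intro w' hw'
    obtain ⟨w, hw, he⟩ : ty K' k w' ∈ tyset K k T := h.symm ▸ ⟨w', hw', rfl⟩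
    exact ⟨w, hw, bisim_of_ty_eq he⟩

end Types

section CharacteristicFormulas

variable {Φ : Type} [Nonempty Φ] {K : KripkeModel Φ}

noncomputable def mlTop : MLFormula Φ :=
  .or (.atom (Classical.arbitrary Φ)) (.natom (Classical.arbitrary Φ))

noncomputable def mlBot : MLFormula Φ :=
  .and (.atom (Classical.arbitrary Φ)) (.natom (Classical.arbitrary Φ))

noncomputable def mlConj (l : List (MLFormula Φ)) : MLFormula Φ := l.foldr .and mlTop

noncomputable def mlDisj (l : List (MLFormula Φ)) : MLFormula Φ := l.foldr .or mlBot

lemma mlSatW_top (w : K.W) : mlSatW K mlTop w :=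
  em _

lemma not_mlSatW_bot (w : K.W) : ¬ mlSatW K mlBot w :=
  fun h => h.2 h.1

lemma mlSatW_conj {l : List (MLFormula Φ)} {w : K.W} :
    mlSatW K (mlConj l) w ↔ ∀ ψ ∈ l, mlSatW K ψ w := by
  induction l with
  | nil => simpa [mlConj] using mlSatW_top w
  | cons a l ih => simp [mlConj, mlSatW, ← ih]

lemma mlSatW_disj {l : List (MLFormula Φ)} {w : K.W} :
    mlSatW K (mlDisj l) w ↔ ∃ ψ ∈ l, mlSatW K ψ w := by
  induction l with
  | nil => simpa [mlDisj] using not_mlSatW_bot w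
  | cons a l ih => simp [mlDisj, mlSatW, ← ih]

variable [Finite Φ]

open Classical in
noncomputable def valuationFormula (A : Set Φ) : MLFormula Φ :=
  mlConj ((listOf Set.univ).map fun p => if p ∈ A then .atom p else .natom p)

lemma mlSatW_valuationFormula {A : Set Φ} {w : K.W} :
    mlSatW K (valuationFormula A) w ↔ {p | w ∈ K.V p} = A := by
  simp only [valuationFormula, mlSatW_conj, List.forall_mem_map, mem_listOf, Set.mem_univ,
    true_implies, Set.ext_iff, Set.mem_ofPred_eq]
  refine forall_congr' fun p => ?_
  split_ifs with hp <;> simp [mlSatW, hp]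

noncomputable def typeFormula : (k : ℕ) → ModType Φ k → MLFormula Φ
  | 0, A => valuationFormula A
  | k + 1, τ => .and (valuationFormula τ.1)
      (.and (mlConj ((listOf τ.2).map fun σ => .dia (typeFormula k σ)))
        (.box (mlDisj ((listOf τ.2).map (typeFormula k)))))

lemma mlSatW_typeFormula : ∀ {k : ℕ} {τ : ModType Φ k} {w : K.W},
    mlSatW K (typeFormula k τ) w ↔ ty K k w = τ
  | 0, _, _ => mlSatW_valuationFormula
  | k + 1, τ, w => by
      have hty : ty K (k + 1) w = τ ↔
          {p | w ∈ K.V p} = τ.1 ∧ ty K k '' {v | K.R w v} = τ.2 := Prod.ext_iff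
      rw [hty, Set.Subset.antisymm_iff (a := ty K k '' _), Set.image_subset_iff]
      simp only [typeFormula, mlSatW, mlSatW_valuationFormula, mlSatW_conj, mlSatW_disj,
        List.forall_mem_map]
      simp only [List.mem_map, exists_exists_and_eq_and, mem_listOf, mlSatW_typeFormula,
        exists_eq_right']
      exact and_congr_right' and_comm

end CharacteristicFormulas

section FlatFormulas

variable {Φ : Type} {K : KripkeModel Φ}

def MLFormula.toMINC : MLFormula Φ → MINCFormula Φ
  | .atom p => .atom p
  | .natom p => .natom p
  | .and φ ψ => .and φ.toMINC ψ.toMINC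
  | .or φ ψ => .or φ.toMINC ψ.toMINC
  | .dia φ => .dia φ.toMINC
  | .box φ => .box φ.toMINC

lemma mincSat_toMINC (ψ : MLFormula Φ) :
    ∀ T : Set K.W, mincSat K ψ.toMINC T ↔ ∀ w ∈ T, mlSatW K ψ w := by
  induction ψ with
  | atom p => exact fun T => Iff.rfl
  | natom p =>
      exact fun T => Set.eq_empty_iff_forall_notMem.trans
        ⟨fun h w hw hp => h w ⟨hw, hp⟩, fun h w hw => h w hw.1 hw.2⟩
  | and φ χ ihφ ihχ =>
      intro T
      show mincSat K φ.toMINC T ∧ mincSat K χ.toMINC T ↔ _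
      rw [ihφ, ihχ]
      exact forall₂_and.symm
  | or φ χ ihφ ihχ =>
      intro T
      constructor
      · rintro ⟨T₁, T₂, rfl, h₁, h₂⟩ w (hw | hw)
        exacts [Or.inl ((ihφ T₁).1 h₁ w hw), Or.inr ((ihχ T₂).1 h₂ w hw)]
      · intro h
        refine ⟨{w ∈ T | mlSatW K φ w}, {w ∈ T | mlSatW K χ w}, ?_,
          (ihφ _).2 fun w hw => hw.2, (ihχ _).2 fun w hw => hw.2⟩
        exact (Set.sep_or.symm.trans (Set.sep_eq_self_iff_mem_true.2 h)).symm
  | dia φ ih =>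
      intro T
      constructor
      · rintro ⟨S, ⟨-, hS⟩, hsat⟩ w hw
        obtain ⟨v, hv, hr⟩ := hS hw
        exact ⟨v, hr, (ih S).1 hsat v hv⟩
      · intro h
        refine ⟨{v ∈ img K T | mlSatW K φ v}, ⟨fun v hv => hv.1, fun w hw => ?_⟩,
          (ih _).2 fun v hv => hv.2⟩
        obtain ⟨v, hr, hv⟩ := h w hw
        exact ⟨v, ⟨⟨w, hw, hr⟩, hv⟩, hr⟩
  | box φ ih =>
      intro T
      refine (ih (img K T)).trans ⟨fun h w hw v hr => h v ⟨w, hw, hr⟩, ?_⟩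
      rintro h v ⟨w, hw, hr⟩
      exact h w hw v hr

variable [Nonempty Φ]

noncomputable def mincConj (l : List (MINCFormula Φ)) : MINCFormula Φ :=
  l.foldr .and mlTop.toMINC

noncomputable def mincDisj (l : List (MINCFormula Φ)) : MINCFormula Φ :=
  l.foldr .or mlBot.toMINC

lemma mincSat_conj {l : List (MINCFormula Φ)} {T : Set K.W} :
    mincSat K (mincConj l) T ↔ ∀ φ ∈ l, mincSat K φ T := by
  induction l with
  | nil => simpa [mincConj, mincSat_toMINC] using fun w _ => mlSatW_top w
  | cons a l ih => simp [mincConj, mincSat, ← ih]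

lemma mincSat_disj_of_mem {l : List (MINCFormula Φ)} {φ : MINCFormula Φ} {T : Set K.W}
    (hφ : φ ∈ l) (h : mincSat K φ T) : mincSat K (mincDisj l) T := by
  induction l with
  | nil => simp at hφ
  | cons a l ih =>
      rcases List.mem_cons.1 hφ with rfl | hφ
      · exact ⟨T, ∅, (Set.union_empty T).symm, h, mincSat_empty _⟩
      · exact ⟨∅, T, (Set.empty_union T).symm, mincSat_empty _, ih hφ⟩

lemma mincSat_disj_induction {l : List (MINCFormula Φ)} {P : Set K.W → Prop} (hempty : P ∅)
    (hunion : ∀ T₁ T₂, P T₁ → P T₂ → P (T₁ ∪ T₂))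
    (hdisj : ∀ φ ∈ l, ∀ T, mincSat K φ T → P T)
    {T : Set K.W} (h : mincSat K (mincDisj l) T) : P T := by
  induction l generalizing T with
  | nil =>
      have : T = ∅ := Set.eq_empty_of_forall_notMem fun w hw =>
        not_mlSatW_bot w ((mincSat_toMINC mlBot T).1 h w hw)
      exact this ▸ hempty
  | cons a l ih =>
      obtain ⟨T₁, T₂, rfl, h₁, h₂⟩ := h
      exact hunion T₁ T₂ (hdisj a List.mem_cons_self T₁ h₁)
        (ih (fun φ hφ => hdisj φ (List.mem_cons_of_mem a hφ)) h₂)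

variable [Finite Φ]

/-- The inclusion atom `⊤ ⊆ χ_τ` holds in a nonempty team iff some world of the team has type
`τ`. -/
noncomputable def typeSetFormula (k : ℕ) (S : Set (ModType Φ k)) : MINCFormula Φ :=
  .and (mlDisj ((listOf S).map (typeFormula k))).toMINC
    (mincConj ((listOf S).map fun τ => .inc [mlTop] [typeFormula k τ]))

lemma mincSat_typeSetFormula {k : ℕ} {S : Set (ModType Φ k)} {T : Set K.W} :
    mincSat K (typeSetFormula k S) T ↔ T = ∅ ∨ tyset K k T = S := by
  have hsub : mincSat K (mlDisj ((listOf S).map (typeFormula k))).toMINC T ↔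
      tyset K k T ⊆ S := by
    simp [mincSat_toMINC, mlSatW_disj, mem_listOf, mlSatW_typeFormula, tyset, Set.subset_def]
  have hsup : mincSat K (mincConj ((listOf S).map fun τ => .inc [mlTop] [typeFormula k τ])) T ↔
      ∀ τ ∈ S, ∀ w ∈ T, τ ∈ tyset K k T := by
    simp [mincSat_conj, mincSat, mlSatW_top, mem_listOf, mlSatW_typeFormula, tyset]
  show mincSat K _ T ∧ mincSat K _ T ↔ _
  rw [hsub, hsup]
  rcases T.eq_empty_or_nonempty with rfl | ⟨w, hw⟩
  · simp [tyset]
  · refine ⟨fun ⟨h₁, h₂⟩ => Or.inr (h₁.antisymm fun τ hτ => h₂ τ hτ w hw), ?_⟩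
    rintro (rfl | rfl)
    · exact absurd hw (Set.notMem_empty w)
    · exact ⟨subset_rfl, fun τ hτ _ _ => hτ⟩

end FlatFormulas

/-- Characterisation of MINC-definability: a class of Φ-models with teams is definable
in MINC iff it is closed under unions, closed under team `k`-bisimulation for some `k`,
and has the empty team property. -/
theorem minc_definability_characterisation [Fintype Φ] [Nonempty Φ]
    (𝒦 : ∀ K : KripkeModel Φ, Set K.W → Prop) :
    (∃ φ : MINCFormula Φ, ∀ (K : KripkeModel Φ) (T : Set K.W), 𝒦 K T ↔ mincSat K φ T) ↔
      ((∀ (K : KripkeModel Φ) (I : Type), Nonempty I → ∀ T : I → Set K.W,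
          (∀ i, 𝒦 K (T i)) → 𝒦 K (⋃ i, T i)) ∧
       (∃ k : ℕ, ∀ (K K' : KripkeModel Φ) (T : Set K.W) (T' : Set K'.W),
          𝒦 K T → teamBisim K K' k T T' → 𝒦 K' T') ∧
       (∀ K : KripkeModel Φ, 𝒦 K (∅ : Set K.W))) := by
  constructor
  · rintro ⟨φ, hφ⟩
    refine ⟨fun K I _ T h => ?_, ⟨mincMd φ, fun K K' T T' h hb => ?_⟩, fun K => ?_⟩
    · exact (hφ K _).2 (mincSat_iUnion φ T fun i => (hφ K (T i)).1 (h i))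
    · exact (hφ K' T').2 (mincSat_of_teamBisim φ le_rfl ((hφ K T).1 h) hb)
    · exact (hφ K ∅).2 (mincSat_empty φ)
  · rintro ⟨hunion, ⟨k, hbisim⟩, hempty⟩
    let realised : Set (Set (ModType Φ k)) :=
      {S | ∃ (K : KripkeModel Φ) (T : Set K.W), 𝒦 K T ∧ tyset K k T = S}
    have h𝒦 : ∀ (K : KripkeModel Φ) (T : Set K.W), tyset K k T ∈ realised → 𝒦 K T :=
      fun K T ⟨K₀, T₀, h₀, he⟩ => hbisim K₀ K T₀ T h₀ (teamBisim_of_tyset_eq he)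
    have hunion₂ : ∀ (K : KripkeModel Φ) (T₁ T₂ : Set K.W), 𝒦 K T₁ → 𝒦 K T₂ → 𝒦 K (T₁ ∪ T₂) :=
      fun K T₁ T₂ h₁ h₂ => Set.union_eq_iUnion (s₁ := T₁) ▸
        hunion K Bool ⟨true⟩ _ (Bool.forall_bool.2 ⟨h₂, h₁⟩)
    refine ⟨mincDisj ((listOf realised).map (typeSetFormula k)),
      fun K T => ⟨fun h => ?_, mincSat_disj_induction (hempty K) (hunion₂ K) ?_⟩⟩
    · exact mincSat_disj_of_mem (List.mem_map_of_mem (mem_listOf.2 ⟨K, T, h, rfl⟩))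
        (mincSat_typeSetFormula.2 (Or.inr rfl))
    · simp only [List.forall_mem_map, mem_listOf]
      intro S hS T hT
      rcases mincSat_typeSetFormula.1 hT with rfl | rfl
      exacts [hempty K, h𝒦 K T hS]

end TeamSem
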